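/- Let (M, γ) be a weighted binary matroid with nonnegative weights, T = {p₁,p₂,p₃} a circuit of M, and define (at q = 2): z₀ = Z̃(M\p₁,p₂,p₃; γ), z₁ = Z̃(M/p₁\p₂,p₃; γ), z₂ = Z̃(M/p₂\p₁,p₃; γ), z₃ = Z̃(M/p₃\p₁,p₂; γ), z₄ = Z̃(M/p₁,p₂,p₃; γ). Then: (i) z₀ > 0; (ii) z₀ ≤ zᵢ ≤ 2z₀ for i = 1,2,3; (iii) z₄/2 < zᵢ ≤ z₄ for i = 1,2,3; and (iv) z₁ + z₂ + z₃ = 2z₀ + z₄. -/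

import Mathlib

/-!
Fix `A ⊆ E`. Projecting the cycles of `M | (A ∪ T)` onto the coordinates of `T` gives a subspace
`V ≤ GF(2)^T` containing the all-ones vector `1` (as `T` is a cycle), and
`r(A ∪ S) = r(A) + |S| - dim (V ∩ GF(2)^S)` for every `S ⊆ T`. Translation by `1` pairs the
weight-one and weight-two vectors of `V`, so `Σⱼ |V ∩ ⟨eⱼ⟩| = 2 + |V| / 2`: this is identity (iv)
summand by summand, and, `|V|` being a power of two, it also pins down the five possible classes,
giving the inequalities. Strictness comes from `A = ∅`, where no `pⱼ` is a loop.
-/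

open Finset

/-- Vectors in GF(2)^α vanishing outside A. -/
noncomputable def supportedOn {α : Type*} [Fintype α] [DecidableEq α] (A : Finset α) :
    Submodule (ZMod 2) (α → ZMod 2) :=
  Submodule.pi (↑(Aᶜ)) fun _ => ⊥

/-- Rank function of the binary matroid with cycle space 𝒞. -/
noncomputable def rk {α : Type*} [Fintype α] [DecidableEq α]
    (𝒞 : Submodule (ZMod 2) (α → ZMod 2)) (A : Finset α) : ℤ :=
  (A.card : ℤ) - Module.finrank (ZMod 2) ↥(𝒞 ⊓ supportedOn A)

/-- The GF(2) indicator vector of a finset. -/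
def ind {α : Type*} [DecidableEq α] (S : Finset α) : α → ZMod 2 :=
  fun i => if i ∈ S then 1 else 0

open Function LinearMap Module

section Supports

variable {α : Type*} [Fintype α] [DecidableEq α]

lemma mem_supportedOn {A : Finset α} {x : α → ZMod 2} :
    x ∈ supportedOn A ↔ ∀ i ∉ A, x i = 0 := by
  simp [supportedOn, Submodule.mem_pi]

lemma supportedOn_empty : supportedOn (∅ : Finset α) = ⊥ := by
  ext x
  simp [mem_supportedOn, funext_iff]

lemma supportedOn_univ : supportedOn (univ : Finset α) = ⊤ := by
  ext x
  simp [mem_supportedOn]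

lemma rk_empty (W : Submodule (ZMod 2) (α → ZMod 2)) : rk W ∅ = 0 := by
  simp [rk, supportedOn_empty]

lemma inf_supportedOn_singleton_eq_bot {W : Submodule (ZMod 2) (α → ZMod 2)} {p : α}
    (hp : ind {p} ∉ W) : W ⊓ supportedOn {p} = ⊥ := by
  refine eq_bot_iff.2 fun x ⟨hxW, hx⟩ => ?_
  have hx : ∀ i ≠ p, x i = 0 := fun i hi => mem_supportedOn.1 hx i (by simpa using hi)
  rcases (by decide : ∀ a : ZMod 2, a = 0 ∨ a = 1) (x p) with h | h
  · exact (Submodule.mem_bot _).2 <| funext fun i => by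
      by_cases hi : i = p
      · rw [hi, h]; rfl
      · exact hx i hi
  · refine absurd (?_ : x = ind {p}) fun hxp => hp (hxp ▸ hxW)
    funext i
    by_cases hi : i = p
    · simp [ind, hi, h]
    · simp [ind, hi, hx i hi]

lemma rk_singleton {W : Submodule (ZMod 2) (α → ZMod 2)} {p : α} (hp : ind {p} ∉ W) :
    rk W {p} = 1 := by
  simp [rk, inf_supportedOn_singleton_eq_bot hp]

end Supports

lemma Submodule.finrank_eq_finrank_map_add_finrank_inf_ker {K M N : Type*} [Field K]
    [AddCommGroup M] [Module K M] [AddCommGroup N] [Module K N] [FiniteDimensional K M]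
    (W : Submodule K M) (f : M →ₗ[K] N) :
    finrank K W = finrank K (W.map f) + finrank K ↥(W ⊓ ker f) := by
  rw [← (f.domRestrict W).finrank_range_add_finrank_ker, range_domRestrict, ker_domRestrict,
    ← Submodule.finrank_map_subtype_eq, Submodule.map_comap_subtype, inf_comm]

section Contraction

variable {α ι : Type*} [Fintype α] [DecidableEq α] [Fintype ι]
  (W : Submodule (ZMod 2) (α → ZMod 2)) (A : Finset α) (g : ι → α)

/-- The cycle space of the minor `(M | (A ∪ T)) / A`, where `M` has cycle space `W` and the
elements of `T` are enumerated by `g`. -/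
noncomputable def contractionCycles : Submodule (ZMod 2) (ι → ZMod 2) :=
  (W ⊓ supportedOn (A ∪ univ.image g)).map (funLeft (ZMod 2) (ZMod 2) g)

variable {W A g}

lemma one_mem_contractionCycles (hT : ind (univ.image g) ∈ W) :
    1 ∈ contractionCycles W A g := by
  refine Submodule.mem_map.2 ⟨ind (univ.image g), ⟨hT, mem_supportedOn.2 fun i hi => ?_⟩, ?_⟩
  · simp_all [ind]
  · ext j
    simp [ind, funLeft_apply]

lemma inf_supportedOn_union_image_inf_ker (hA : ∀ j, g j ∉ A) (S : Finset ι) :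
    W ⊓ supportedOn (A ∪ S.image g) ⊓ ker (funLeft (ZMod 2) (ZMod 2) g) =
      W ⊓ supportedOn A := by
  ext x
  simp only [Submodule.mem_inf, mem_ker, mem_supportedOn, funext_iff, funLeft_apply,
    Pi.zero_apply, mem_union, mem_image, not_or, not_exists, not_and]
  constructor
  · rintro ⟨⟨hxW, hx⟩, hxg⟩
    refine ⟨hxW, fun i hi => ?_⟩
    by_cases h : ∃ j, g j = i
    · obtain ⟨j, rfl⟩ := h
      exact hxg j
    · exact hx i ⟨hi, fun j _ hj => h ⟨j, hj⟩⟩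
  · rintro ⟨hxW, hx⟩
    exact ⟨⟨hxW, fun i hi => hx i hi.1⟩, fun j => hx _ (hA j)⟩

lemma map_inf_supportedOn_union_image [DecidableEq ι] (hg : Injective g) (hA : ∀ j, g j ∉ A)
    (S : Finset ι) :
    (W ⊓ supportedOn (A ∪ S.image g)).map (funLeft (ZMod 2) (ZMod 2) g) =
      contractionCycles W A g ⊓ supportedOn S := by
  ext y
  simp only [contractionCycles, Submodule.mem_inf, Submodule.mem_map, mem_supportedOn,
    mem_union, mem_image, mem_univ, true_and, not_or, not_exists, not_and]
  constructor
  · rintro ⟨x, ⟨hxW, hx⟩, rfl⟩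
    refine ⟨⟨x, ⟨hxW, fun i hi => hx i ⟨hi.1, fun j _ => hi.2 j⟩⟩, rfl⟩, fun j hj => ?_⟩
    exact hx _ ⟨hA j, fun k hk hkj => hj (hg hkj ▸ hk)⟩
  · rintro ⟨⟨x, ⟨hxW, hx⟩, rfl⟩, hxS⟩
    refine ⟨x, ⟨hxW, fun i hi => ?_⟩, rfl⟩
    by_cases h : ∃ j, g j = i
    · obtain ⟨j, rfl⟩ := h
      exact hxS j fun hj => hi.2 j hj rfl
    · exact hx i ⟨hi.1, fun j hj => h ⟨j, hj⟩⟩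

lemma rk_union_image [DecidableEq ι] (hg : Injective g) (hA : ∀ j, g j ∉ A) (S : Finset ι) :
    rk W (A ∪ S.image g) =
      rk W A + S.card - finrank (ZMod 2) ↥(contractionCycles W A g ⊓ supportedOn S) := by
  have hdisj : Disjoint A (S.image g) := disjoint_left.2 fun i hi hi' => by
    obtain ⟨j, -, rfl⟩ := mem_image.1 hi'
    exact hA j hi
  rw [rk, rk, card_union_of_disjoint hdisj, card_image_of_injective S hg,
    Submodule.finrank_eq_finrank_map_add_finrank_inf_ker _ (funLeft (ZMod 2) (ZMod 2) g),
    map_inf_supportedOn_union_image hg hA, inf_supportedOn_union_image_inf_ker hA]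
  push_cast
  ring

end Contraction

section Triangle

-- The vectors supported at `j` are `0` and `eⱼ`; `x ↦ x + 1` swaps `eⱼ` with a weight-two vector.
lemma card_filter_supported_singleton_of_add_closed :
    ∀ S : Finset (Fin 3 → ZMod 2), 0 ∈ S → 1 ∈ S → (∀ x ∈ S, ∀ y ∈ S, x + y ∈ S) →
      (∀ j, #{x ∈ S | ∀ k ≠ j, x k = 0} ≤ 2 ∧ 2 * #{x ∈ S | ∀ k ≠ j, x k = 0} ≤ #S ∧
        #S ≤ 4 * #{x ∈ S | ∀ k ≠ j, x k = 0}) ∧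
      2 * ∑ j, #{x ∈ S | ∀ k ≠ j, x k = 0} = 4 + #S := by
  decide +kernel

lemma two_pow_finrank_eq_card {ι : Type*} [Fintype ι] [DecidableEq ι]
    (U : Submodule (ZMod 2) (ι → ZMod 2)) [DecidablePred (· ∈ U)] :
    2 ^ finrank (ZMod 2) U = #{x | x ∈ U} := by
  rw [← Fintype.card_subtype, ← Nat.card_eq_fintype_card, natCard_eq_pow_finrank (K := ZMod 2),
    Nat.card_zmod]

variable {V : Submodule (ZMod 2) (Fin 3 → ZMod 2)}

lemma two_pow_finrank_inf_supportedOn_singleton [DecidablePred (· ∈ V)] (j : Fin 3) :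
    2 ^ finrank (ZMod 2) ↥(V ⊓ supportedOn {j}) =
      #{x ∈ {x | x ∈ V} | ∀ k ≠ j, x k = 0} := by
  classical
  rw [two_pow_finrank_eq_card, filter_filter]
  congr! 2 with x
  simp [mem_supportedOn]

lemma two_pow_finrank_relations_of_one_mem (hV : 1 ∈ V) :
    (∀ j, 2 ^ finrank (ZMod 2) ↥(V ⊓ supportedOn {j}) ≤ 2 ∧
      2 * 2 ^ finrank (ZMod 2) ↥(V ⊓ supportedOn {j}) ≤ 2 ^ finrank (ZMod 2) V ∧
      2 ^ finrank (ZMod 2) V ≤ 4 * 2 ^ finrank (ZMod 2) ↥(V ⊓ supportedOn {j})) ∧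
    2 * ∑ j, 2 ^ finrank (ZMod 2) ↥(V ⊓ supportedOn {j}) =
      4 + 2 ^ finrank (ZMod 2) V := by
  classical
  simp only [two_pow_finrank_eq_card V, two_pow_finrank_inf_supportedOn_singleton]
  exact card_filter_supported_singleton_of_add_closed {x | x ∈ V} (by simp) (by simpa using hV)
      (by simpa using fun x hx y hy => V.add_mem hx hy)

lemma finrank_inf_supportedOn_singleton_bounds (hV : 1 ∈ V) (j : Fin 3) :
    finrank (ZMod 2) ↥(V ⊓ supportedOn {j}) ≤ 1 ∧
      finrank (ZMod 2) ↥(V ⊓ supportedOn {j}) + 1 ≤ finrank (ZMod 2) V ∧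
      finrank (ZMod 2) V ≤ finrank (ZMod 2) ↥(V ⊓ supportedOn {j}) + 2 := by
  obtain ⟨h₁, h₂, h₃⟩ := (two_pow_finrank_relations_of_one_mem hV).1 j
  have hpow {m n : ℕ} : 2 ^ m ≤ 2 ^ n ↔ m ≤ n := pow_le_pow_iff_right₀ one_lt_two
  exact ⟨hpow.1 (by rwa [pow_one]), hpow.1 (by rwa [pow_succ']),
    hpow.1 (by rw [pow_add]; omega)⟩

end Triangle

section Circuit

variable {α : Type*} [Fintype α] [DecidableEq α] {W : Submodule (ZMod 2) (α → ZMod 2)}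
  {A : Finset α} {g : Fin 3 → α}

lemma rk_insert_eq (hg : Injective g) (hA : ∀ j, g j ∉ A) (j : Fin 3) :
    rk W (insert (g j) A) =
      rk W A + 1 - finrank (ZMod 2) ↥(contractionCycles W A g ⊓ supportedOn {j}) := by
  rw [insert_eq, union_comm, ← image_singleton]
  exact rk_union_image hg hA {j}

lemma rk_union_univ_image_eq (hg : Injective g) (hA : ∀ j, g j ∉ A) :
    rk W (A ∪ univ.image g) = rk W A + 3 - finrank (ZMod 2) (contractionCycles W A g) := by
  rw [rk_union_image hg hA univ, supportedOn_univ, inf_top_eq, card_univ, Fintype.card_fin]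
  rfl

lemma rk_insert_bounds (hg : Injective g) (hA : ∀ j, g j ∉ A) (hT : ind (univ.image g) ∈ W)
    (j : Fin 3) :
    rk W A ≤ rk W (insert (g j) A) ∧ rk W (insert (g j) A) ≤ rk W A + 1 ∧
      rk W (insert (g j) A) ≤ rk W (A ∪ univ.image g) ∧
      rk W (A ∪ univ.image g) ≤ rk W (insert (g j) A) + 1 := by
  have := finrank_inf_supportedOn_singleton_bounds (one_mem_contractionCycles (A := A) hT) j
  rw [rk_insert_eq hg hA, rk_union_univ_image_eq hg hA]
  omega

lemma sum_two_zpow_rk_insert (hg : Injective g) (hA : ∀ j, g j ∉ A)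
    (hT : ind (univ.image g) ∈ W) :
    ∑ j, (2 : ℝ) ^ (-(rk W (insert (g j) A) - 1)) =
      2 * 2 ^ (-rk W A) + 2 ^ (-(rk W (A ∪ univ.image g) - 2)) := by
  have h : 2 * ∑ j, (2 : ℝ) ^ finrank (ZMod 2) ↥(contractionCycles W A g ⊓ supportedOn {j})
      = 4 + 2 ^ finrank (ZMod 2) (contractionCycles W A g) := by
    exact_mod_cast (two_pow_finrank_relations_of_one_mem (one_mem_contractionCycles (A := A) hT)).2
  have h2 : (2 : ℝ) ≠ 0 := two_ne_zero
  simp only [rk_insert_eq hg hA, rk_union_univ_image_eq hg hA,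
    show ∀ a b : ℤ, -(a + 1 - b - 1) = -a + b by intros; ring,
    show ∀ a b : ℤ, -(a + 3 - b - 2) = -a + b - 1 by intros; ring,
    zpow_add₀ h2, zpow_sub₀ h2, zpow_natCast, ← mul_sum]
  linear_combination (2 : ℝ) ^ (-rk W A) / 2 * h

lemma rk_singleton_lt_rk (hg : Injective g) (hT : ind (univ.image g) ∈ W)
    (hloop : ∀ j, ind {g j} ∉ W) (j : Fin 3) : rk W {g j} < rk W (univ.image g) := by
  have hA : ∀ j, g j ∉ (∅ : Finset α) := fun _ => notMem_empty _
  have hm : ∀ j, finrank (ZMod 2) ↥(contractionCycles W ∅ g ⊓ supportedOn {j}) = 0 := by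
    intro j
    have hrk := rk_insert_eq (W := W) hg hA j
    rw [insert_empty, rk_singleton (hloop j), rk_empty] at hrk
    omega
  have hsum := (two_pow_finrank_relations_of_one_mem (one_mem_contractionCycles (A := ∅) hT)).2
  simp only [hm, pow_zero, sum_const, card_univ, Fintype.card_fin, smul_eq_mul] at hsum
  have hd : finrank (ZMod 2) (contractionCycles W ∅ g) = 1 :=
    Nat.pow_right_injective le_rfl (by simp only [pow_one]; omega)
  have hrk := rk_union_univ_image_eq (W := W) hg hA
  rw [empty_union, rk_empty, hd] at hrk
  rw [rk_singleton (hloop j), hrk]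
  norm_num

end Circuit

section MinorSum

variable {α : Type*} (E : Finset α) (γ : α → ℝ)

/-- `Z̃(N; γ)` at `q = 2` for a minor `N` with ground set `E` and rank function `r`. -/
noncomputable def minorZ (r : Finset α → ℤ) : ℝ :=
  ∑ A ∈ E.powerset, (∏ e ∈ A, γ e) * (2 : ℝ) ^ (-r A)

variable {E γ}

lemma minorZ_pos (hγ : ∀ e, 0 ≤ γ e) (r : Finset α → ℤ) : 0 < minorZ E γ r :=
  sum_pos' (fun A _ => mul_nonneg (prod_nonneg fun e _ => hγ e) (zpow_nonneg zero_le_two _))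
    ⟨∅, empty_mem_powerset E, by simp [zpow_pos]⟩

lemma minorZ_le_minorZ (hγ : ∀ e, 0 ≤ γ e) {r r' : Finset α → ℤ}
    (h : ∀ A ∈ E.powerset, r A ≤ r' A) : minorZ E γ r' ≤ minorZ E γ r :=
  sum_le_sum fun A hA => mul_le_mul_of_nonneg_left
    (zpow_le_zpow_right₀ one_le_two (neg_le_neg (h A hA))) (prod_nonneg fun e _ => hγ e)

lemma minorZ_lt_minorZ (hγ : ∀ e, 0 ≤ γ e) {r r' : Finset α → ℤ}
    (h : ∀ A ∈ E.powerset, r A ≤ r' A) (h₀ : r ∅ < r' ∅) : minorZ E γ r' < minorZ E γ r :=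
  sum_lt_sum (fun A hA => mul_le_mul_of_nonneg_left
      (zpow_le_zpow_right₀ one_le_two (neg_le_neg (h A hA))) (prod_nonneg fun e _ => hγ e))
    ⟨∅, empty_mem_powerset E,
      by simpa using zpow_lt_zpow_right₀ (one_lt_two (α := ℝ)) (neg_lt_neg h₀)⟩

lemma minorZ_sub_one (r : Finset α → ℤ) :
    minorZ E γ (fun A => r A - 1) = 2 * minorZ E γ r := by
  rw [minorZ, minorZ, mul_sum]
  refine sum_congr rfl fun A _ => ?_
  rw [neg_sub, sub_eq_neg_add, zpow_add₀ two_ne_zero, zpow_one]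
  ring

end MinorSum

section CircuitMinors

variable {α : Type*} [Fintype α] [DecidableEq α] {W : Submodule (ZMod 2) (α → ZMod 2)}
  {E : Finset α} {g : Fin 3 → α} {γ : α → ℝ}

lemma minorZ_contract_bounds (hγ : ∀ e, 0 ≤ γ e) (hg : Injective g) (hE : ∀ j, g j ∉ E)
    (hT : ind (univ.image g) ∈ W) (hloop : ∀ j, ind {g j} ∉ W) (j : Fin 3) :
    (minorZ E γ (rk W) ≤ minorZ E γ (fun A => rk W (insert (g j) A) - 1) ∧
      minorZ E γ (fun A => rk W (insert (g j) A) - 1) ≤ 2 * minorZ E γ (rk W)) ∧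
    (minorZ E γ (fun A => rk W (A ∪ univ.image g) - 2) / 2 <
        minorZ E γ (fun A => rk W (insert (g j) A) - 1) ∧
      minorZ E γ (fun A => rk W (insert (g j) A) - 1) ≤
        minorZ E γ (fun A => rk W (A ∪ univ.image g) - 2)) := by
  have hb A (hA : A ∈ E.powerset) :=
    rk_insert_bounds hg (fun j h => hE j (mem_powerset.1 hA h)) hT j
  have hz₄ : minorZ E γ (fun A => rk W (A ∪ univ.image g) - 2) =
      2 * minorZ E γ (fun A => rk W (A ∪ univ.image g) - 2 + 1) := by
    simpa using minorZ_sub_one (E := E) (γ := γ) (fun A => rk W (A ∪ univ.image g) - 2 + 1)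
  refine ⟨⟨minorZ_le_minorZ hγ fun A hA => ?_, ?_⟩, ⟨?_, minorZ_le_minorZ hγ fun A hA => ?_⟩⟩
  · linarith [hb A hA]
  · rw [← minorZ_sub_one]
    exact minorZ_le_minorZ hγ fun A hA => by linarith [hb A hA]
  · rw [hz₄, mul_div_cancel_left₀ _ two_ne_zero]
    refine minorZ_lt_minorZ hγ (fun A hA => by linarith [hb A hA]) ?_
    simp only [insert_empty, empty_union]
    linarith [rk_singleton_lt_rk hg hT hloop j]
  · linarith [hb A hA]

lemma sum_minorZ_contract (hg : Injective g) (hE : ∀ j, g j ∉ E)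
    (hT : ind (univ.image g) ∈ W) :
    ∑ j, minorZ E γ (fun A => rk W (insert (g j) A) - 1) =
      2 * minorZ E γ (rk W) + minorZ E γ (fun A => rk W (A ∪ univ.image g) - 2) := by
  simp only [minorZ, mul_sum, ← sum_add_distrib]
  rw [sum_comm]
  refine sum_congr rfl fun A hA => ?_
  rw [← mul_sum, sum_two_zpow_rk_insert hg (fun j h => hE j (mem_powerset.1 hA h)) hT]
  ring

end CircuitMinors

theorem stmt_7_general {α : Type*} [Fintype α] [DecidableEq α]
    (E : Finset α) (p₁ p₂ p₃ : α)
    (hne : p₁ ≠ p₂ ∧ p₁ ≠ p₃ ∧ p₂ ≠ p₃)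
    (hpE : p₁ ∉ E ∧ p₂ ∉ E ∧ p₃ ∉ E)
    (𝒞 : Submodule (ZMod 2) (α → ZMod 2))
    (hcirc : ind {p₁, p₂, p₃} ∈ 𝒞)
    (hmin : ∀ S : Finset α, S ⊆ {p₁, p₂, p₃} → S.Nonempty → S ≠ {p₁, p₂, p₃} →
      ind S ∉ 𝒞)
    (γ : α → ℝ) (hγ : ∀ e, 0 ≤ γ e)
    (z₀ z₁ z₂ z₃ z₄ : ℝ)
    (hz₀ : z₀ = ∑ A ∈ E.powerset, (∏ e ∈ A, γ e) * (2 : ℝ) ^ (-rk 𝒞 A))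
    (hz₁ : z₁ = ∑ A ∈ E.powerset,
      (∏ e ∈ A, γ e) * (2 : ℝ) ^ (-(rk 𝒞 (insert p₁ A) - 1)))
    (hz₂ : z₂ = ∑ A ∈ E.powerset,
      (∏ e ∈ A, γ e) * (2 : ℝ) ^ (-(rk 𝒞 (insert p₂ A) - 1)))
    (hz₃ : z₃ = ∑ A ∈ E.powerset,
      (∏ e ∈ A, γ e) * (2 : ℝ) ^ (-(rk 𝒞 (insert p₃ A) - 1)))
    (hz₄ : z₄ = ∑ A ∈ E.powerset,
      (∏ e ∈ A, γ e) * (2 : ℝ) ^ (-(rk 𝒞 (A ∪ {p₁, p₂, p₃}) - 2))) :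
    0 < z₀ ∧
      (z₀ ≤ z₁ ∧ z₁ ≤ 2 * z₀) ∧ (z₀ ≤ z₂ ∧ z₂ ≤ 2 * z₀) ∧ (z₀ ≤ z₃ ∧ z₃ ≤ 2 * z₀) ∧
      (z₄ / 2 < z₁ ∧ z₁ ≤ z₄) ∧ (z₄ / 2 < z₂ ∧ z₂ ≤ z₄) ∧ (z₄ / 2 < z₃ ∧ z₃ ≤ z₄) ∧
      z₁ + z₂ + z₃ = 2 * z₀ + z₄ := by
  obtain ⟨h₁₂, h₁₃, h₂₃⟩ := hne
  set g : Fin 3 → α := ![p₁, p₂, p₃]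
  have himage : univ.image g = {p₁, p₂, p₃} := by
    ext; simp [g, Fin.exists_fin_succ, eq_comm]
  have hg : Injective g := by
    intro i j; fin_cases i <;> fin_cases j <;> simp [g, h₁₂, h₁₃, h₂₃, h₁₂.symm, h₁₃.symm, h₂₃.symm]
  have hE : ∀ j, g j ∉ E := by
    intro j; fin_cases j <;> simp [g, hpE]
  have hloop : ∀ j, ind {g j} ∉ 𝒞 := fun j =>
    hmin _ (by rw [singleton_subset_iff, ← himage]; exact mem_image_of_mem g (mem_univ j))
      (singleton_nonempty _) fun h => by
        simpa [card_eq_three.2 ⟨_, _, _, h₁₂, h₁₃, h₂₃, rfl⟩] using congrArg card h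
  rw [← himage] at hcirc hz₄
  obtain ⟨hb₁, hc₁⟩ := minorZ_contract_bounds hγ hg hE hcirc hloop 0
  obtain ⟨hb₂, hc₂⟩ := minorZ_contract_bounds hγ hg hE hcirc hloop 1
  obtain ⟨hb₃, hc₃⟩ := minorZ_contract_bounds hγ hg hE hcirc hloop 2
  have hsum := sum_minorZ_contract (γ := γ) hg hE hcirc
  rw [Fin.sum_univ_three] at hsum
  subst hz₀ hz₁ hz₂ hz₃ hz₄
  exact ⟨minorZ_pos hγ _, hb₁, hb₂, hb₃, hc₁, hc₂, hc₃, hsum⟩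

/-- For a weighted binary matroid (M,γ) with nonnegative weights and circuit
T = {p₁,p₂,p₃}, the five minor Tutte specializations at q = 2,
z₀ = Z̃(M\p₁,p₂,p₃;γ), zⱼ = Z̃(M/pⱼ\rest;γ) (j = 1,2,3), z₄ = Z̃(M/p₁,p₂,p₃;γ),
satisfy: (i) z₀ > 0; (ii) z₀ ≤ zᵢ ≤ 2z₀ (i = 1,2,3); (iii) z₄/2 < zᵢ ≤ z₄ (i = 1,2,3);
(iv) z₁ + z₂ + z₃ = 2z₀ + z₄.
(Here r_{M/pⱼ}(A) = r(A ∪ {pⱼ}) − 1 and r_{M/T}(A) = r(A ∪ T) − 2, since T is a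
circuit.) -/
theorem stmt_7 {α : Type*} [Fintype α] [DecidableEq α]
    (E : Finset α) (p₁ p₂ p₃ : α)
    (hne : p₁ ≠ p₂ ∧ p₁ ≠ p₃ ∧ p₂ ≠ p₃)
    (hpE : p₁ ∉ E ∧ p₂ ∉ E ∧ p₃ ∉ E)
    (𝒞 : Submodule (ZMod 2) (α → ZMod 2))
    (hsupp : ∀ x ∈ 𝒞, ∀ i, i ∉ E ∪ {p₁, p₂, p₃} → x i = 0)
    (hcirc : ind {p₁, p₂, p₃} ∈ 𝒞)
    (hmin : ∀ S : Finset α, S ⊆ {p₁, p₂, p₃} → S.Nonempty → S ≠ {p₁, p₂, p₃} →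
      ind S ∉ 𝒞)
    (γ : α → ℝ) (hγ : ∀ e, 0 ≤ γ e)
    (z₀ z₁ z₂ z₃ z₄ : ℝ)
    (hz₀ : z₀ = ∑ A ∈ E.powerset, (∏ e ∈ A, γ e) * (2 : ℝ) ^ (-rk 𝒞 A))
    (hz₁ : z₁ = ∑ A ∈ E.powerset,
      (∏ e ∈ A, γ e) * (2 : ℝ) ^ (-(rk 𝒞 (insert p₁ A) - 1)))
    (hz₂ : z₂ = ∑ A ∈ E.powerset,
      (∏ e ∈ A, γ e) * (2 : ℝ) ^ (-(rk 𝒞 (insert p₂ A) - 1)))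
    (hz₃ : z₃ = ∑ A ∈ E.powerset,
      (∏ e ∈ A, γ e) * (2 : ℝ) ^ (-(rk 𝒞 (insert p₃ A) - 1)))
    (hz₄ : z₄ = ∑ A ∈ E.powerset,
      (∏ e ∈ A, γ e) * (2 : ℝ) ^ (-(rk 𝒞 (A ∪ {p₁, p₂, p₃}) - 2))) :
    0 < z₀ ∧
      (z₀ ≤ z₁ ∧ z₁ ≤ 2 * z₀) ∧ (z₀ ≤ z₂ ∧ z₂ ≤ 2 * z₀) ∧ (z₀ ≤ z₃ ∧ z₃ ≤ 2 * z₀) ∧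
      (z₄ / 2 < z₁ ∧ z₁ ≤ z₄) ∧ (z₄ / 2 < z₂ ∧ z₂ ≤ z₄) ∧ (z₄ / 2 < z₃ ∧ z₃ ≤ z₄) ∧
      z₁ + z₂ + z₃ = 2 * z₀ + z₄ :=
  stmt_7_general E p₁ p₂ p₃ hne hpE 𝒞 hcirc hmin γ hγ z₀ z₁ z₂ z₃ z₄ hz₀ hz₁ hz₂ hz₃ hz₄
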